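/- Decidability of ENP: the set of modal formulas derivable in the logic ENP is decidable, i.e., the predicate 'A is derivable in ENP' on modal formulas is a decidable predicate. -/

import Mathlib

/-- Modal formulas: propositional variables, ⊥, ¬, ∧, ∨, →, □. -/
inductive MF : Type
  | var : ℕ → MF
  | bot : MF
  | neg : MF → MF
  | and : MF → MF → MF
  | or : MF → MF → MF
  | imp : MF → MF → MF
  | box : MF → MF

/-- Defined biconditional A ↔ B := (A → B) ∧ (B → A). -/
def MF.iff (A B : MF) : MF := (A.imp B).and (B.imp A)

/-- Propositional evaluation: variables and boxed formulas are treated as atoms. -/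
def MF.peval (v : MF → Bool) : MF → Bool
  | .var n => v (.var n)
  | .bot => false
  | .neg A => !(A.peval v)
  | .and A B => A.peval v && B.peval v
  | .or A B => A.peval v || B.peval v
  | .imp A B => !(A.peval v) || B.peval v
  | .box A => v A.box

/-- A is a propositional tautology. -/
def MF.Tautology (A : MF) : Prop := ∀ v : MF → Bool, A.peval v = true

/-- The logic ENP: EN plus the axiom ¬□⊥. -/
inductive ENP : MF → Prop
  | taut {A : MF} : A.Tautology → ENP A
  | axP : ENP MF.bot.box.neg
  | mp {A B : MF} : ENP (A.imp B) → ENP A → ENP B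
  | nec {A : MF} : ENP A → ENP A.box
  | re {A B : MF} : ENP (A.iff B) → ENP (A.box.iff B.box)

/-- An injective Gödel numbering of modal formulas, via the pairing function. -/
def encodeMF : MF → ℕ
  | .var n => Nat.pair 0 n
  | .bot => Nat.pair 1 0
  | .neg A => Nat.pair 2 (encodeMF A)
  | .and A B => Nat.pair 3 (Nat.pair (encodeMF A) (encodeMF B))
  | .or A B => Nat.pair 4 (Nat.pair (encodeMF A) (encodeMF B))
  | .imp A B => Nat.pair 5 (Nat.pair (encodeMF A) (encodeMF B))
  | .box A => Nat.pair 6 (encodeMF A)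

/-!
`ENP ⊢ A ↔ B` holds iff `A` and `B` agree under every valuation of their atoms (variables and
boxed formulas `□C`) that respects what ENP proves about the arguments `C`: `□C` is false when
`⊢ C ↔ ⊥`, true when `⊢ C ↔ ⊤`, and `□C`, `□D` agree when `⊢ C ↔ D`. Such a valuation extends
to one validating every theorem of ENP; conversely, the finitely many constraints involved are
themselves theorems (by axiom P, necessitation and RE), from which `A ↔ B` follows
propositionally. The constraints only concern pairs of strictly smaller formulas, so on Gödel
codes this is a course-of-values recursion on `Nat.pair (code A) (code B)`, hence primitive
recursive; finally, `A` is a theorem iff `A ↔ ⊤` is.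
-/

namespace MF

def top : MF := bot.neg

def atoms : MF → List MF
  | var n => [var n]
  | bot => []
  | neg A => A.atoms
  | and A B | or A B | imp A B => A.atoms ++ B.atoms
  | box A => [box A]

theorem peval_congr {v w : MF → Bool} {A : MF} (h : ∀ P ∈ A.atoms, v P = w P) :
    A.peval v = A.peval w := by
  induction A with
  | var n | box C => exact h _ (List.mem_singleton_self _)
  | bot => rfl
  | neg A ih => simp only [peval, ih h]
  | and A B ihA ihB | or A B ihA ihB | imp A B ihA ihB =>
    simp only [peval, ihA fun P hP => h P (List.mem_append_left _ hP),
      ihB fun P hP => h P (List.mem_append_right _ hP)]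

def collapse : MF → Bool
  | var _ => true
  | bot => false
  | neg A => !A.collapse
  | and A B => A.collapse && B.collapse
  | or A B => A.collapse || B.collapse
  | imp A B => !A.collapse || B.collapse
  | box A => A.collapse

theorem peval_iff_eq_true {v : MF → Bool} {A B : MF} :
    (A.iff B).peval v = true ↔ A.peval v = B.peval v := by
  simp only [MF.iff, peval]
  cases A.peval v <;> cases B.peval v <;> decide

theorem peval_collapse (A : MF) : A.peval (fun X => X.collapse) = A.collapse := by
  induction A <;> simp only [peval, collapse, *]

end MF

namespace ENP

open MF

theorem of_forall_peval {l : List MF} (hl : ∀ C ∈ l, ENP C) {X : MF}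
    (hX : ∀ v, (∀ C ∈ l, C.peval v = true) → X.peval v = true) : ENP X := by
  induction l generalizing X with
  | nil => exact taut fun v => hX v (by simp)
  | cons C l ih =>
    refine mp (ih (fun D hD => hl D (List.mem_cons_of_mem _ hD)) fun v hv => ?_)
      (hl C List.mem_cons_self)
    cases hC : C.peval v
    · simp [peval, hC]
    · simp [peval, hX v (List.forall_mem_cons.2 ⟨hC, hv⟩)]

theorem iff_refl (A : MF) : ENP (A.iff A) :=
  taut fun v => by simp [MF.iff, peval]

theorem iff_symm {A B : MF} (h : ENP (A.iff B)) : ENP (B.iff A) :=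
  of_forall_peval (l := [A.iff B]) (by simpa using h) fun v => by
    simp only [List.mem_singleton, forall_eq, MF.iff, peval]
    cases A.peval v <;> cases B.peval v <;> simp

theorem iff_trans {A B C : MF} (hAB : ENP (A.iff B)) (hBC : ENP (B.iff C)) :
    ENP (A.iff C) :=
  of_forall_peval (l := [A.iff B, B.iff C]) (by simp [hAB, hBC]) fun v => by
    simp only [List.mem_cons, List.not_mem_nil, forall_eq_or_imp, forall_eq, MF.iff, peval,
      or_false]
    cases A.peval v <;> cases B.peval v <;> cases C.peval v <;> simp

theorem of_iff {A B : MF} (hAB : ENP (A.iff B)) (hA : ENP A) : ENP B :=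
  of_forall_peval (l := [A.iff B, A]) (by simp [hAB, hA]) fun v => by
    simp only [List.mem_cons, List.not_mem_nil, forall_eq_or_imp, forall_eq, MF.iff, peval,
      or_false]
    cases A.peval v <;> cases B.peval v <;> simp

theorem iff_top_iff {A : MF} : ENP (A.iff top) ↔ ENP A := by
  constructor <;> intro h <;>
    refine of_forall_peval (l := [_]) (by simpa using h) fun v => ?_ <;>
    cases hA : A.peval v <;> simp [MF.iff, top, peval, hA]

theorem not_bot : ¬ ENP bot := by
  suffices ∀ {X}, ENP X → X.collapse = true from fun h => by simpa [collapse] using this h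
  intro X h
  induction h with
  | taut t => exact peval_collapse _ ▸ t _
  | axP => rfl
  | mp _ _ ihAB ihA => simpa [collapse, ihA] using ihAB
  | nec _ ih => exact ih
  | re _ ih => exact ih

def Admissible (v : MF → Bool) : Prop :=
  v bot.box = false ∧ (∀ A : MF, ENP A → v A.box = true) ∧
    ∀ A B : MF, ENP (A.iff B) → v A.box = v B.box

theorem peval_of_admissible {v : MF → Bool} (hv : Admissible v) {X : MF} (h : ENP X) :
    X.peval v = true := by
  obtain ⟨hbot, hnec, hre⟩ := hv
  induction h with
  | taut t => exact t v
  | axP => simp [peval, hbot]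
  | mp _ _ ihAB ihA => simpa [peval, ihA] using ihAB
  | nec h => exact hnec _ h
  | re h => simp [MF.iff, peval, hre _ _ h]

theorem neg_box_of_iff_bot {A : MF} (h : ENP (A.iff bot)) : ENP A.box.neg :=
  of_forall_peval (l := [A.box.iff bot.box, bot.box.neg]) (by simp [h.re, axP]) fun v => by
    simp only [List.mem_cons, List.not_mem_nil, forall_eq_or_imp, forall_eq, or_false,
      peval_iff_eq_true]
    rintro ⟨heq, hbot⟩
    simp only [peval] at heq hbot ⊢
    simpa [heq] using hbot

def Respects (S : List MF) (v : MF → Bool) : Prop :=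
  ∀ C : MF, C.box ∈ S →
    (ENP (C.iff bot) → v C.box = false) ∧ (ENP (C.iff top) → v C.box = true) ∧
      ∀ D : MF, D.box ∈ S → ENP (C.iff D) → v C.box = v D.box

theorem Respects.congr {S : List MF} {v w : MF → Bool} (hvw : ∀ P ∈ S, v P = w P)
    (hv : Respects S v) : Respects S w := by
  intro C hC
  obtain ⟨hbot, htop, hequiv⟩ := hv C hC
  refine ⟨fun h => ?_, fun h => ?_, fun D hD h => ?_⟩ <;> rw [← hvw _ hC]
  exacts [hbot h, htop h, (hequiv D hD h).trans (hvw _ hD)]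

open Classical in
noncomputable def extendRespecting (S : List MF) (v : MF → Bool) : MF → Bool
  | box C => if h : ∃ D, D.box ∈ S ∧ ENP (C.iff D) then v h.choose.box else decide (ENP C)
  | X => v X

section extendRespecting

variable {S : List MF} {v : MF → Bool}

theorem extendRespecting_box {C D : MF} (hv : Respects S v) (hD : D.box ∈ S)
    (hCD : ENP (C.iff D)) : extendRespecting S v C.box = v D.box := by
  have h : ∃ D, D.box ∈ S ∧ ENP (C.iff D) := ⟨D, hD, hCD⟩
  obtain ⟨hmem, hequiv⟩ := h.choose_spec
  rw [extendRespecting, dif_pos h]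
  exact (hv _ hmem).2.2 D hD (iff_trans (iff_symm hequiv) hCD)

open Classical in
theorem extendRespecting_box_of_not_exists {C : MF} (h : ¬ ∃ D, D.box ∈ S ∧ ENP (C.iff D)) :
    extendRespecting S v C.box = decide (ENP C) := by
  rw [extendRespecting, dif_neg h]

theorem extendRespecting_eq_of_mem (hv : Respects S v) {P : MF} (hP : P ∈ S) :
    extendRespecting S v P = v P := by
  cases P with
  | box C => exact extendRespecting_box hv hP (iff_refl C)
  | _ => rfl

theorem admissible_extendRespecting (hv : Respects S v) : Admissible (extendRespecting S v) := by
  refine ⟨?_, fun A hA => ?_, fun A B hAB => ?_⟩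
  · by_cases h : ∃ D, D.box ∈ S ∧ ENP (bot.iff D)
    · obtain ⟨D, hD, hequiv⟩ := h
      rw [extendRespecting_box hv hD hequiv]
      exact (hv D hD).1 (iff_symm hequiv)
    · simp [extendRespecting_box_of_not_exists h, not_bot]
  · by_cases h : ∃ D, D.box ∈ S ∧ ENP (A.iff D)
    · obtain ⟨D, hD, hequiv⟩ := h
      rw [extendRespecting_box hv hD hequiv]
      exact (hv D hD).2.1 (iff_top_iff.2 (of_iff hequiv hA))
    · simp [extendRespecting_box_of_not_exists h, hA]
  · by_cases h : ∃ D, D.box ∈ S ∧ ENP (A.iff D)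
    · obtain ⟨D, hD, hequiv⟩ := h
      rw [extendRespecting_box hv hD hequiv,
        extendRespecting_box hv hD (iff_trans (iff_symm hAB) hequiv)]
    · have h' : ¬ ∃ D, D.box ∈ S ∧ ENP (B.iff D) := fun ⟨D, hD, hequiv⟩ =>
        h ⟨D, hD, iff_trans hAB hequiv⟩
      rw [extendRespecting_box_of_not_exists h, extendRespecting_box_of_not_exists h',
        decide_eq_decide]
      exact ⟨of_iff hAB, of_iff (iff_symm hAB)⟩

end extendRespecting

def boxConstraints (S : List MF) : List MF :=
  S.flatMap fun P => P :: P.neg :: S.map P.iff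

theorem respects_of_forall_boxConstraints {S : List MF} {v : MF → Bool}
    (hv : ∀ X ∈ boxConstraints S, ENP X → X.peval v = true) : Respects S v := by
  intro C hC
  have hmem : ∀ X ∈ C.box :: C.box.neg :: S.map C.box.iff, X ∈ boxConstraints S :=
    fun X hX => List.mem_flatMap.2 ⟨_, hC, hX⟩
  refine ⟨fun h => ?_, fun h => ?_, fun D hD h => ?_⟩
  · simpa [peval] using hv _ (hmem _ (by simp)) (neg_box_of_iff_bot h)
  · exact hv _ (hmem _ (by simp)) (iff_top_iff.1 h).nec
  · exact peval_iff_eq_true.1 (hv _ (hmem _ (.tail _ (.tail _ (List.mem_map_of_mem hD)))) h.re)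

theorem iff_iff_forall_respects {A B : MF} :
    ENP (A.iff B) ↔ ∀ v, Respects (A.atoms ++ B.atoms) v → A.peval v = B.peval v := by
  classical
  constructor
  · intro h v hv
    have hext : ∀ P ∈ A.atoms ++ B.atoms, extendRespecting _ v P = v P :=
      fun _ => extendRespecting_eq_of_mem hv
    rw [← peval_congr fun P hP => hext P (List.mem_append_left _ hP),
      ← peval_congr fun P hP => hext P (List.mem_append_right _ hP)]
    exact peval_iff_eq_true.1 (peval_of_admissible (admissible_extendRespecting hv) h)
  · intro h
    refine of_forall_peval (l := (boxConstraints (A.atoms ++ B.atoms)).filter (ENP ·))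
      (by simp) fun v hv => peval_iff_eq_true.2 (h v ?_)
    exact respects_of_forall_boxConstraints fun X hX hXprov => hv X (by simp [hX, hXprov])

end ENP

theorem Nat.lt_pair_of_pos {t : ℕ} (ht : 0 < t) (x : ℕ) : x < Nat.pair t x := by
  unfold Nat.pair
  split <;> nlinarith

theorem Nat.pair_lt_pair_of_lt_max {a b c d : ℕ} (hc : c < max a b) (hd : d < max a b) :
    Nat.pair c d < Nat.pair a b :=
  calc Nat.pair c d < (max c d + 1) ^ 2 := Nat.pair_lt_max_add_one_sq c d
    _ ≤ max a b ^ 2 := Nat.pow_le_pow_left (max_lt hc hd) 2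
    _ ≤ Nat.pair a b := (Nat.le_add_right _ _).trans (Nat.max_sq_add_min_le_pair a b)

theorem encodeMF_injective : Function.Injective encodeMF := by
  intro A
  induction A <;> intro B h <;> cases B <;> grind [encodeMF, Nat.pair_eq_pair]

theorem encodeMF_lt_encodeMF_box (A : MF) : encodeMF A < encodeMF A.box :=
  Nat.lt_pair_of_pos (by norm_num) _

theorem encodeMF_le_of_mem_atoms {A P : MF} (h : P ∈ A.atoms) : encodeMF P ≤ encodeMF A := by
  induction A with
  | var n | box C => rw [List.mem_singleton.1 h]
  | bot => simp [MF.atoms] at h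
  | neg A ih => exact (ih h).trans (Nat.right_le_pair _ _)
  | and A B ihA ihB | or A B ihA ihB | imp A B ihA ihB =>
    refine (List.mem_append.1 h).elim (fun h => (ihA h).trans ?_) (fun h => (ihB h).trans ?_)
    · exact (Nat.left_le_pair _ _).trans (Nat.right_le_pair _ _)
    · exact (Nat.right_le_pair _ _).trans (Nat.right_le_pair _ _)

theorem encodeMF_top_lt_encodeMF_box (C : MF) : encodeMF MF.top < encodeMF C.box := by
  change 8 < Nat.pair 6 (encodeMF C)
  unfold Nat.pair
  split <;> nlinarith

theorem unpair_encodeMF_fst_eq_six_iff {P : MF} :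
    (encodeMF P).unpair.1 = 6 ↔ ∃ C, P = MF.box C := by
  cases P <;> simp [encodeMF]

theorem forall_mem_map_encodeMF_box_iff {S : List MF} {Φ : ℕ → Prop} :
    (∀ p ∈ S.map encodeMF, p.unpair.1 = 6 → Φ p) ↔ ∀ C : MF, C.box ∈ S → Φ (encodeMF C.box) := by
  simp only [List.forall_mem_map, unpair_encodeMF_fst_eq_six_iff]
  exact ⟨fun h C hC => h _ hC ⟨C, rfl⟩, fun h P hP ⟨C, hPC⟩ => hPC ▸ h C (hPC ▸ hP)⟩

theorem forall_sublists_map_encodeMF_iff {S : List MF} {Q : (MF → Bool) → Prop}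
    (hQ : ∀ v w, (∀ P ∈ S, v P = w P) → Q v → Q w) :
    (∀ T ∈ (S.map encodeMF).sublists, Q fun X => T.contains (encodeMF X)) ↔ ∀ v, Q v := by
  refine ⟨fun h v => ?_, fun h T _ => h _⟩
  refine hQ _ _ (fun P hP => ?_) (h ((S.filter v).map encodeMF)
    (List.mem_sublists.2 (List.filter_sublist.map encodeMF)))
  simp [encodeMF_injective.eq_iff, hP]

/-- The clauses of a recursion over codes of formulas: `var` and `bot` receive the code itself,
`box` the code and the value at the code of its argument. -/
structure CodeCases (σ : Type) where
  var : ℕ → σ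
  bot : ℕ → σ
  neg : σ → σ
  and : σ → σ → σ
  or : σ → σ → σ
  imp : σ → σ → σ
  box : ℕ → σ → σ

namespace CodeCases

variable {σ : Type} [Inhabited σ] (c : CodeCases σ)

def step (n : ℕ) (prev : ℕ → σ) : σ :=
  if n.unpair.1 = 0 then c.var n
  else if n.unpair.1 = 1 then c.bot n
  else if n.unpair.1 = 2 then c.neg (prev n.unpair.2)
  else if n.unpair.1 = 3 then c.and (prev n.unpair.2.unpair.1) (prev n.unpair.2.unpair.2)
  else if n.unpair.1 = 4 then c.or (prev n.unpair.2.unpair.1) (prev n.unpair.2.unpair.2)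
  else if n.unpair.1 = 5 then c.imp (prev n.unpair.2.unpair.1) (prev n.unpair.2.unpair.2)
  else if n.unpair.1 = 6 then c.box n (prev n.unpair.2)
  else default

/-- Course-of-values recursion over codes; numbers that are not codes get `default`. -/
def fold (n : ℕ) : σ :=
  c.step n fun m => if _ : m < n then fold m else default

theorem fold_eq (n : ℕ) : c.fold n = c.step n fun m => if m < n then c.fold m else default := by
  rw [fold]
  simp only [dite_eq_ite]

@[simp] theorem fold_pair_zero (x : ℕ) : c.fold (Nat.pair 0 x) = c.var (Nat.pair 0 x) := by
  simp [fold_eq c (Nat.pair 0 x), step]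

@[simp] theorem fold_pair_one (x : ℕ) : c.fold (Nat.pair 1 x) = c.bot (Nat.pair 1 x) := by
  simp [fold_eq c (Nat.pair 1 x), step]

@[simp] theorem fold_pair_two (x : ℕ) : c.fold (Nat.pair 2 x) = c.neg (c.fold x) := by
  simp [fold_eq c (Nat.pair 2 x), step, Nat.lt_pair_of_pos]

theorem fold_pair_binary {t : ℕ} (ht : 0 < t) (x y : ℕ) (f : σ → σ → σ)
    (hf : ∀ prev : ℕ → σ, c.step (Nat.pair t (Nat.pair x y)) prev = f (prev x) (prev y)) :
    c.fold (Nat.pair t (Nat.pair x y)) = f (c.fold x) (c.fold y) := by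
  have hpair := Nat.lt_pair_of_pos ht (Nat.pair x y)
  rw [fold_eq, hf, if_pos ((Nat.left_le_pair x y).trans_lt hpair),
    if_pos ((Nat.right_le_pair x y).trans_lt hpair)]

@[simp] theorem fold_pair_three (x y : ℕ) :
    c.fold (Nat.pair 3 (Nat.pair x y)) = c.and (c.fold x) (c.fold y) :=
  c.fold_pair_binary (by norm_num) x y _ fun _ => by simp [step]

@[simp] theorem fold_pair_four (x y : ℕ) :
    c.fold (Nat.pair 4 (Nat.pair x y)) = c.or (c.fold x) (c.fold y) :=
  c.fold_pair_binary (by norm_num) x y _ fun _ => by simp [step]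

@[simp] theorem fold_pair_five (x y : ℕ) :
    c.fold (Nat.pair 5 (Nat.pair x y)) = c.imp (c.fold x) (c.fold y) :=
  c.fold_pair_binary (by norm_num) x y _ fun _ => by simp [step]

@[simp] theorem fold_pair_six (x : ℕ) :
    c.fold (Nat.pair 6 x) = c.box (Nat.pair 6 x) (c.fold x) := by
  simp [fold_eq c (Nat.pair 6 x), step, Nat.lt_pair_of_pos]


def valid : CodeCases Bool where
  var _ := true
  bot n := n == Nat.pair 1 0
  neg := id
  and := (· && ·)
  or := (· && ·)
  imp := (· && ·)
  box _ b := b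

def atoms : CodeCases (List ℕ) where
  var n := [n]
  bot _ := []
  neg := id
  and := (· ++ ·)
  or := (· ++ ·)
  imp := (· ++ ·)
  box n _ := [n]

def eval (T : List ℕ) : CodeCases Bool where
  var := T.contains
  bot _ := false
  neg := (!·)
  and := (· && ·)
  or := (· || ·)
  imp a b := !a || b
  box n _ := T.contains n

end CodeCases

def codeValid : ℕ → Bool := CodeCases.valid.fold

def codeAtoms : ℕ → List ℕ := CodeCases.atoms.fold

def codeEval (T : List ℕ) : ℕ → Bool := (CodeCases.eval T).fold

theorem codeValid_encodeMF (A : MF) : codeValid (encodeMF A) = true := by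
  induction A <;> simp_all [codeValid, CodeCases.valid, encodeMF]

theorem codeAtoms_encodeMF (A : MF) : codeAtoms (encodeMF A) = A.atoms.map encodeMF := by
  induction A <;> simp_all [codeAtoms, CodeCases.atoms, encodeMF, MF.atoms]

theorem codeEval_encodeMF (T : List ℕ) (A : MF) :
    codeEval T (encodeMF A) = A.peval fun X => T.contains (encodeMF X) := by
  induction A <;> simp_all [codeEval, CodeCases.eval, encodeMF, MF.peval]

theorem exists_encodeMF_eq_of_codeValid {n : ℕ} (h : codeValid n = true) :
    ∃ A, encodeMF A = n := by
  induction n using Nat.strong_induction_on with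
  | _ n ih =>
  obtain ⟨t, y, z, rfl⟩ : ∃ t y z, n = Nat.pair t (Nat.pair y z) :=
    ⟨_, _, _, by rw [Nat.pair_unpair, Nat.pair_unpair]⟩
  have ih_unary (ht : 0 < t) (hx : codeValid (Nat.pair y z) = true) :
      ∃ A, encodeMF A = Nat.pair y z :=
    ih _ (Nat.lt_pair_of_pos ht _) hx
  have ih_binary (ht : 0 < t) (hyz : (codeValid y && codeValid z) = true) :
      ∃ A B, encodeMF A = y ∧ encodeMF B = z := by
    rw [Bool.and_eq_true] at hyz
    obtain ⟨A, hA⟩ := ih y ((Nat.left_le_pair y z).trans_lt (Nat.lt_pair_of_pos ht _)) hyz.1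
    obtain ⟨B, hB⟩ := ih z ((Nat.right_le_pair y z).trans_lt (Nat.lt_pair_of_pos ht _)) hyz.2
    exact ⟨A, B, hA, hB⟩
  match t, h with
  | 0, _ => exact ⟨.var _, rfl⟩
  | 1, h => exact ⟨.bot, by simp_all [codeValid, CodeCases.valid, encodeMF]⟩
  | 2, h =>
    obtain ⟨A, hA⟩ := ih_unary (by norm_num) (by simpa [codeValid, CodeCases.valid] using h)
    exact ⟨A.neg, by rw [encodeMF, hA]⟩
  | 3, h =>
    obtain ⟨A, B, rfl, rfl⟩ :=
      ih_binary (by norm_num) (by simpa [codeValid, CodeCases.valid] using h)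
    exact ⟨A.and B, rfl⟩
  | 4, h =>
    obtain ⟨A, B, rfl, rfl⟩ :=
      ih_binary (by norm_num) (by simpa [codeValid, CodeCases.valid] using h)
    exact ⟨A.or B, rfl⟩
  | 5, h =>
    obtain ⟨A, B, rfl, rfl⟩ :=
      ih_binary (by norm_num) (by simpa [codeValid, CodeCases.valid] using h)
    exact ⟨A.imp B, rfl⟩
  | 6, h =>
    obtain ⟨A, hA⟩ := ih_unary (by norm_num) (by simpa [codeValid, CodeCases.valid] using h)
    exact ⟨A.box, by rw [encodeMF, hA]⟩
  | t + 7, h =>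
    rw [codeValid, CodeCases.fold_eq] at h
    simp [CodeCases.step] at h

/-- The code-level counterpart of `ENP.Respects`, with `E` deciding ENP-equivalence of codes. -/
def RespectsCode (E : ℕ → ℕ → Bool) (S T : List ℕ) : Prop :=
  ∀ p ∈ S, p.unpair.1 = 6 →
    (E p.unpair.2 (encodeMF .bot) → p ∉ T) ∧ (E p.unpair.2 (encodeMF .top) → p ∈ T) ∧
      ∀ q ∈ S, q.unpair.1 = 6 → E p.unpair.2 q.unpair.2 → (p ∈ T ↔ q ∈ T)

instance (E : ℕ → ℕ → Bool) (S T : List ℕ) : Decidable (RespectsCode E S T) := by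
  unfold RespectsCode; infer_instance

theorem respectsCode_map_encodeMF_iff {S : List MF} {E : ℕ → ℕ → Bool}
    (hE : ∀ C D : MF, C.box ∈ S → (D = .bot ∨ D = .top ∨ D.box ∈ S) →
      (E (encodeMF C) (encodeMF D) = true ↔ ENP (C.iff D)))
    (T : List ℕ) :
    RespectsCode E (S.map encodeMF) T ↔ ENP.Respects S fun X => T.contains (encodeMF X) := by
  have hunpair (C : MF) : (encodeMF C.box).unpair.2 = encodeMF C := by simp [encodeMF]
  simp only [RespectsCode, forall_mem_map_encodeMF_box_iff, hunpair]
  refine forall₂_congr fun C hC => ?_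
  rw [hE C _ hC (.inl rfl), hE C _ hC (.inr (.inl rfl)), Bool.eq_false_iff,
    Ne, List.contains_iff_mem]
  refine and_congr_right' (and_congr_right' (forall₂_congr fun D hD => ?_))
  rw [hE C D hC (.inr (.inr hD)), Bool.eq_iff_iff, List.contains_iff_mem, List.contains_iff_mem]

def codeEquivStep (n : ℕ) (prev : ℕ → Bool) : Bool :=
  let S := codeAtoms n.unpair.1 ++ codeAtoms n.unpair.2
  decide (∀ T ∈ S.sublists, RespectsCode (fun c d => prev (Nat.pair c d)) S T →
    codeEval T n.unpair.1 = codeEval T n.unpair.2)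

def codeEquiv (n : ℕ) : Bool :=
  codeEquivStep n fun m => if _ : m < n then codeEquiv m else false

theorem codeEquiv_eq (n : ℕ) :
    codeEquiv n = codeEquivStep n fun m => if m < n then codeEquiv m else false := by
  rw [codeEquiv]
  simp only [dite_eq_ite]

theorem codeEquiv_pair_encodeMF (A B : MF) :
    codeEquiv (Nat.pair (encodeMF A) (encodeMF B)) = true ↔ ENP (A.iff B) := by
  induction hn : Nat.pair (encodeMF A) (encodeMF B) using Nat.strong_induction_on
    generalizing A B with
  | _ n ih =>
  subst hn
  set S := A.atoms ++ B.atoms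
  have hbox_le {C : MF} (hC : C.box ∈ S) : encodeMF C.box ≤ max (encodeMF A) (encodeMF B) :=
    (List.mem_append.1 hC).elim (fun h => le_max_of_le_left (encodeMF_le_of_mem_atoms h))
      (fun h => le_max_of_le_right (encodeMF_le_of_mem_atoms h))
  have hE (C D : MF) (hC : C.box ∈ S) (hD : D = .bot ∨ D = .top ∨ D.box ∈ S) :
      (if Nat.pair (encodeMF C) (encodeMF D) < Nat.pair (encodeMF A) (encodeMF B) then
        codeEquiv (Nat.pair (encodeMF C) (encodeMF D)) else false) = true ↔ ENP (C.iff D) := by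
    have hD : encodeMF D < max (encodeMF A) (encodeMF B) := by
      rcases hD with rfl | rfl | hD
      · exact lt_of_lt_of_le (lt_trans (by decide) (encodeMF_top_lt_encodeMF_box C)) (hbox_le hC)
      · exact lt_of_lt_of_le (encodeMF_top_lt_encodeMF_box C) (hbox_le hC)
      · exact lt_of_lt_of_le (encodeMF_lt_encodeMF_box D) (hbox_le hD)
    have hlt := Nat.pair_lt_pair_of_lt_max ((encodeMF_lt_encodeMF_box C).trans_le (hbox_le hC)) hD
    rw [if_pos hlt]
    exact ih _ hlt C D rfl
  rw [codeEquiv_eq, codeEquivStep]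
  simp only [Nat.unpair_pair, codeAtoms_encodeMF, ← List.map_append, codeEval_encodeMF,
    decide_eq_true_iff]
  rw [ENP.iff_iff_forall_respects, ← forall_sublists_map_encodeMF_iff]
  · refine forall₂_congr fun T _ => ?_
    rw [respectsCode_map_encodeMF_iff hE]
  · intro v w hvw hv hw
    rw [← MF.peval_congr fun P hP => hvw P (List.mem_append_left _ hP),
      ← MF.peval_congr fun P hP => hvw P (List.mem_append_right _ hP)]
    exact hv (hw.congr fun P hP => (hvw P hP).symm)

section Primrec

open Primrec

variable {α β σ : Type} [Primcodable α] [Primcodable β] [Primcodable σ]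

theorem PrimrecPred.imp {p q : α → Prop} (hp : PrimrecPred p) (hq : PrimrecPred q) :
    PrimrecPred fun a => p a → q a :=
  (hp.not.or hq).of_eq fun _ => imp_iff_not_or.symm

theorem PrimrecPred.iff {p q : α → Prop} (hp : PrimrecPred p) (hq : PrimrecPred q) :
    PrimrecPred fun a => p a ↔ q a :=
  ((hp.imp hq).and (hq.imp hp)).of_eq fun _ => iff_iff_implies_and_implies.symm

theorem PrimrecPred.forall_mem {p : α → β → Prop} {L : α → List β} (hL : Primrec L)
    (hp : PrimrecRel p) : PrimrecPred fun a => ∀ b ∈ L a, p a b :=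
  (PrimrecRel.forall_mem_list hp.swap).comp hL Primrec.id

theorem primrecRel_mem : PrimrecRel fun (n : ℕ) (T : List ℕ) => n ∈ T :=
  (PrimrecRel.exists_mem_list Primrec.eq).swap.of_eq fun n T => by simp

theorem primrec_list_contains : Primrec₂ fun (T : List ℕ) (n : ℕ) => T.contains n :=
  primrecRel_mem.swap.decide.of_eq fun _ _ => by simp

theorem primrec_sublists : Primrec (@List.sublists β) := by
  have h := list_foldr (σ := List (List β)) Primrec.id (const [[]])
    (list_flatMap (snd.comp snd) (list_cons.comp snd (list_cons.comp
      (list_cons.comp (fst.comp (snd.comp fst)) snd) (const []))).to₂).to₂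
  refine h.of_eq fun l => ?_
  induction l with
  | nil => rfl
  | cons b l ih =>
    rw [List.sublists_cons, ← ih]
    rfl

theorem Primrec.nat_strong_rec_of_step [Inhabited σ] {f : α → ℕ → σ} {F : α → ℕ → (ℕ → σ) → σ}
    (hF : Primrec₂ fun a (l : List σ) => F a l.length fun m => l.getD m default)
    (hf : ∀ a n, f a n = F a n fun m => if m < n then f a m else default) : Primrec₂ f := by
  refine nat_strong_rec f (option_some.comp hF).to₂ fun a n => ?_
  have hprev : (fun m => ((List.range n).map (f a)).getD m default) =
      fun m => if m < n then f a m else default := by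
    funext m
    by_cases hm : m < n <;> simp [List.getD_eq_getElem?_getD, hm]
  simp only [List.length_map, List.length_range, hprev, ← hf]

theorem CodeCases.primrec_fold [Inhabited σ] {c : α → CodeCases σ}
    (hvar : Primrec₂ fun a n => (c a).var n) (hbot : Primrec₂ fun a n => (c a).bot n)
    (hneg : Primrec₂ fun a s => (c a).neg s)
    (hand : Primrec₂ fun a (s : σ × σ) => (c a).and s.1 s.2)
    (hor : Primrec₂ fun a (s : σ × σ) => (c a).or s.1 s.2)
    (himp : Primrec₂ fun a (s : σ × σ) => (c a).imp s.1 s.2)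
    (hbox : Primrec₂ fun a (p : ℕ × σ) => (c a).box p.1 p.2) :
    Primrec₂ fun a n => (c a).fold n := by
  refine nat_strong_rec_of_step (F := fun a => (c a).step) ?_ fun a n => (c a).fold_eq n
  have hn : Primrec fun p : α × List σ => p.2.length := list_length.comp snd
  have htag : Primrec fun p : α × List σ => p.2.length.unpair.1 := fst.comp (unpair.comp hn)
  have harg : Primrec fun p : α × List σ => p.2.length.unpair.2 := snd.comp (unpair.comp hn)
  have harg₁ : Primrec fun p : α × List σ => p.2.length.unpair.2.unpair.1 :=
    fst.comp (unpair.comp harg)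
  have harg₂ : Primrec fun p : α × List σ => p.2.length.unpair.2.unpair.2 :=
    snd.comp (unpair.comp harg)
  have hprev {u : α × List σ → ℕ} (hu : Primrec u) :
      Primrec fun p : α × List σ => p.2.getD (u p) default :=
    (list_getD default).comp snd hu
  have hprev₂ : Primrec fun p : α × List σ =>
      (p.2.getD p.2.length.unpair.2.unpair.1 default,
        p.2.getD p.2.length.unpair.2.unpair.2 default) :=
    pair (hprev harg₁) (hprev harg₂)
  have htag_eq (k : ℕ) : PrimrecPred fun p : α × List σ => p.2.length.unpair.1 = k :=
    Primrec.eq.comp htag (const k)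
  refine ite (htag_eq 0) (hvar.comp fst hn) <| ite (htag_eq 1) (hbot.comp fst hn) <|
    ite (htag_eq 2) (hneg.comp fst (hprev harg)) <| ite (htag_eq 3) (hand.comp fst hprev₂) <|
    ite (htag_eq 4) (hor.comp fst hprev₂) <| ite (htag_eq 5) (himp.comp fst hprev₂) <|
    ite (htag_eq 6) (hbox.comp fst (pair hn (hprev harg))) (const default)

theorem primrec_codeValid : Primrec codeValid :=
  (CodeCases.primrec_fold (c := fun (_ : Unit) => CodeCases.valid) (const true)
    (Primrec.beq.comp snd (const _)) snd (Primrec.and.comp (fst.comp snd) (snd.comp snd))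
    (Primrec.and.comp (fst.comp snd) (snd.comp snd))
    (Primrec.and.comp (fst.comp snd) (snd.comp snd)) (snd.comp snd)).comp (const ()) Primrec.id

theorem primrec_codeAtoms : Primrec codeAtoms :=
  (CodeCases.primrec_fold (c := fun (_ : Unit) => CodeCases.atoms) (list_cons.comp snd (const []))
    (const []) snd (list_append.comp (fst.comp snd) (snd.comp snd))
    (list_append.comp (fst.comp snd) (snd.comp snd))
    (list_append.comp (fst.comp snd) (snd.comp snd))
    (list_cons.comp (fst.comp snd) (const []))).comp (const ()) Primrec.id

theorem primrec₂_codeEval : Primrec₂ codeEval :=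
  CodeCases.primrec_fold (c := CodeCases.eval) primrec_list_contains (const false)
    (Primrec.not.comp snd) (Primrec.and.comp (fst.comp snd) (snd.comp snd))
    (Primrec.or.comp (fst.comp snd) (snd.comp snd))
    (Primrec.or.comp (Primrec.not.comp (fst.comp snd)) (snd.comp snd))
    (primrec_list_contains.comp fst (fst.comp snd))

theorem primrecPred_respectsCode {E : α → ℕ → ℕ → Bool}
    (hE : Primrec fun p : α × ℕ × ℕ => E p.1 p.2.1 p.2.2) {S T : α → List ℕ} (hS : Primrec S)
    (hT : Primrec T) : PrimrecPred fun a => RespectsCode (E a) (S a) (T a) := by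
  have hE' {γ : Type} [Primcodable γ] {f : γ → α} {x y : γ → ℕ} (hf : Primrec f) (hx : Primrec x)
      (hy : Primrec y) : PrimrecPred fun c => E (f c) (x c) (y c) = true :=
    Primrec.eq.comp (hE.comp (pair hf (pair hx hy))) (const true)
  have hbox {γ : Type} [Primcodable γ] {x : γ → ℕ} (hx : Primrec x) :
      PrimrecPred fun c => (x c).unpair.1 = 6 :=
    Primrec.eq.comp (fst.comp (unpair.comp hx)) (const 6)
  have harg {γ : Type} [Primcodable γ] {x : γ → ℕ} (hx : Primrec x) :
      Primrec fun c => (x c).unpair.2 :=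
    snd.comp (unpair.comp hx)
  have hmem {γ : Type} [Primcodable γ] {x : γ → ℕ} {f : γ → α} (hx : Primrec x) (hf : Primrec f) :
      PrimrecPred fun c => x c ∈ T (f c) :=
    primrecRel_mem.comp hx (hT.comp hf)
  refine PrimrecPred.forall_mem hS ?_
  refine (hbox snd).imp (((hE' fst (harg snd) (const _)).imp (hmem snd fst).not).and
    (((hE' fst (harg snd) (const _)).imp (hmem snd fst)).and ?_))
  refine PrimrecPred.forall_mem (hS.comp fst) ?_
  exact (hbox snd).imp ((hE' (fst.comp fst) (harg (snd.comp fst)) (harg snd)).imp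
    ((hmem (snd.comp fst) (fst.comp fst)).iff (hmem snd (fst.comp fst))))

theorem primrec_codeEquiv : Primrec codeEquiv := by
  have hn : Primrec fun l : List Bool => l.length := list_length
  have ha : Primrec fun l : List Bool => l.length.unpair.1 := fst.comp (unpair.comp hn)
  have hb : Primrec fun l : List Bool => l.length.unpair.2 := snd.comp (unpair.comp hn)
  have hS : Primrec fun l : List Bool =>
      codeAtoms l.length.unpair.1 ++ codeAtoms l.length.unpair.2 :=
    list_append.comp (primrec_codeAtoms.comp ha) (primrec_codeAtoms.comp hb)
  have hE : Primrec fun p : (List Bool × List ℕ) × ℕ × ℕ =>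
      p.1.1.getD (Nat.pair p.2.1 p.2.2) default :=
    (list_getD default).comp (fst.comp fst) (Primrec₂.natPair.comp (fst.comp snd) (snd.comp snd))
  have hstep : Primrec fun l : List Bool => codeEquivStep l.length fun m => l.getD m default := by
    refine (PrimrecPred.forall_mem (primrec_sublists.comp hS) ?_).decide
    exact (primrecPred_respectsCode hE (hS.comp fst) snd).imp
      (Primrec.eq.comp (primrec₂_codeEval.comp snd (ha.comp fst))
        (primrec₂_codeEval.comp snd (hb.comp fst)))
  exact (nat_strong_rec_of_step (α := Unit) (f := fun _ => codeEquiv)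
    (F := fun _ => codeEquivStep) (hstep.comp snd) fun _ => codeEquiv_eq).comp (const ()) Primrec.id

end Primrec

theorem exists_encodeMF_eq_and_ENP_iff (n : ℕ) :
    (∃ A, encodeMF A = n ∧ ENP A) ↔
      (codeValid n && codeEquiv (Nat.pair n (encodeMF MF.top))) = true := by
  rw [Bool.and_eq_true]
  constructor
  · rintro ⟨A, rfl, hA⟩
    exact ⟨codeValid_encodeMF A, (codeEquiv_pair_encodeMF A MF.top).2 (ENP.iff_top_iff.2 hA)⟩
  · rintro ⟨hvalid, hequiv⟩
    obtain ⟨A, rfl⟩ := exists_encodeMF_eq_of_codeValid hvalid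
    exact ⟨A, rfl, ENP.iff_top_iff.1 ((codeEquiv_pair_encodeMF A MF.top).1 hequiv)⟩

/-- Decidability of ENP: the set of Gödel numbers of ENP-derivable formulas
is a decidable (computable) predicate. -/
theorem ENP_decidable :
    ComputablePred (fun n : ℕ => ∃ A : MF, encodeMF A = n ∧ ENP A) := by
  have hdecider : Primrec fun n => codeValid n && codeEquiv (Nat.pair n (encodeMF MF.top)) :=
    Primrec.and.comp primrec_codeValid
      (primrec_codeEquiv.comp (Primrec₂.natPair.comp Primrec.id (Primrec.const _)))
  exact (Primrec.eq.comp hdecider (Primrec.const true)).of_eq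
    (fun n => (exists_encodeMF_eq_and_ENP_iff n).symm) |>.computablePred
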